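/- Artin's induction theorem: for any finite group G and any virtual character ρ ∈ R(G) (with rational coefficients), there exist cyclic subgroups H_1,…,H_m ≤ G and virtual characters φ_k ∈ R(H_k) with rational coefficients such that ρ = Σ_{k=1}^m Ind_{H_k}^G φ_k. -/

import Mathlib

open scoped BigOperators Classical

/-- The induced class function `Ind_H^G φ` of a function `φ` on a subgroup `H ≤ G`. -/
noncomputable def indChar {G : Type*} [Group G] [Fintype G] (H : Subgroup G) (φ : H → ℂ) :
    G → ℂ :=
  fun g => (Nat.card H : ℂ)⁻¹ *
    ∑ x : G, if h : x⁻¹ * g * x ∈ H then φ ⟨x⁻¹ * g * x, h⟩ else 0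

/-- The character `Ind_H^G 1` induced from the trivial representation of `H`. -/
noncomputable def IndTrivChar {G : Type*} [Group G] [Fintype G] (H : Subgroup G) : G → ℂ :=
  indChar H fun _ => 1

/-- `R(G)`: the ℚ-span of the characters of finite-dimensional complex representations. -/
noncomputable def charSpan (G : Type) [Group G] : Submodule ℚ (G → ℂ) :=
  Submodule.span ℚ {f | ∃ V : FDRep ℂ G, f = V.character}

/-- Functions with rational values, as a ℚ-submodule of `G → ℂ`. -/
noncomputable def ratValued (G : Type*) : Submodule ℚ (G → ℂ) where
  carrier := {f | ∀ g, ∃ q : ℚ, f g = q}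
  add_mem' := by
    intro f g hf hg x
    obtain ⟨a, ha⟩ := hf x
    obtain ⟨b, hb⟩ := hg x
    exact ⟨a + b, by simp [ha, hb]⟩
  zero_mem' := fun x => ⟨0, by simp⟩
  smul_mem' := by
    intro c f hf x
    obtain ⟨a, ha⟩ := hf x
    exact ⟨c * a, by simp [ha, Rat.smul_def]⟩

/-- `R_rat(G)`: virtual characters with rational values. -/
noncomputable def Rrat (G : Type) [Group G] : Submodule ℚ (G → ℂ) :=
  charSpan G ⊓ ratValued G

/-- `S(G)`: the ℚ-span of the induced trivial characters `Ind_H^G 1`. -/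
noncomputable def indTrivSpan (G : Type*) [Group G] [Fintype G] : Submodule ℚ (G → ℂ) :=
  Submodule.span ℚ (Set.range (IndTrivChar (G := G)))

/-!
For a class function `ρ` on `G`, `ρ = ∑_C Ind_C^G (|C|/|G| · θ_C · ρ|_C)` over the cyclic subgroups
`C ≤ G`, where `θ_C` is the indicator of the generators of `C`: each conjugate of `g` generates
exactly one cyclic subgroup, and `Ind_C` averages over the `|G|` conjugates. It remains to see that
`θ_C ∈ R(C)`. By Möbius inversion over the subgroup lattice of the abelian group `C`, `θ_C` is a
rational combination of indicators `1_D` of subgroups `D ≤ C`, and `1_D` is `|C/D|⁻¹` times the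
permutation character of `C` on `C ⧸ D`.
-/

open CategoryTheory.MonoidalCategory Finset

section CharSpan

variable {G : Type} [Group G]

lemma comp_mem_charSpan {H : Type} [Group H] (f : H →* G) {ρ : G → ℂ} (hρ : ρ ∈ charSpan G) :
    ρ ∘ f ∈ charSpan H := by
  induction hρ using Submodule.span_induction with
  | mem x hx =>
    obtain ⟨V, rfl⟩ := hx
    exact Submodule.subset_span ⟨FDRep.of (V.ρ.comp f), rfl⟩
  | zero => exact Submodule.zero_mem _
  | add x y _ _ hx hy => exact Submodule.add_mem _ hx hy
  | smul c x _ hx => exact Submodule.smul_mem _ c hx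

lemma mul_mem_charSpan {ρ σ : G → ℂ} (hρ : ρ ∈ charSpan G) (hσ : σ ∈ charSpan G) :
    ρ * σ ∈ charSpan G := by
  have hmul : charSpan G * charSpan G ≤ charSpan G := by
    rw [charSpan, Submodule.span_mul_span, Submodule.span_le]
    rintro _ ⟨_, ⟨V, rfl⟩, _, ⟨W, rfl⟩, rfl⟩
    exact Submodule.subset_span ⟨V ⊗ W, (FDRep.char_tensor V W).symm⟩
  exact hmul (Submodule.mul_mem_mul hρ hσ)

lemma apply_conj_of_mem_charSpan {ρ : G → ℂ} (hρ : ρ ∈ charSpan G) (g x : G) :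
    ρ (x⁻¹ * g * x) = ρ g := by
  induction hρ using Submodule.span_induction with
  | mem f hf =>
    obtain ⟨V, rfl⟩ := hf
    simpa using FDRep.char_conj V g x⁻¹
  | zero => simp
  | add f h _ _ hf hh => simp [hf, hh]
  | smul c f _ hf => simp [hf]

end CharSpan

lemma FDRep.character_ofMulAction {k G : Type} [Field k] [Group G] (X : Type) [Fintype X]
    [MulAction G X] (g : G) :
    (FDRep.of (Representation.ofMulAction k G X)).character g = #{x : X | g • x = x} := by
  change LinearMap.trace k (MonoidAlgebra k X) (Representation.ofMulAction k G X g) = _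
  rw [LinearMap.trace_eq_matrix_trace k (MonoidAlgebra.basis X k), Matrix.trace,
    Finset.card_filter, Nat.cast_sum]
  refine Finset.sum_congr rfl fun x _ => ?_
  rw [Matrix.diag_apply, LinearMap.toMatrix_apply, MonoidAlgebra.basis_apply,
    Representation.ofMulAction_single]
  change (MonoidAlgebra.single (g • x) (1 : k)).coeff x = _
  simp [MonoidAlgebra.coeff_single, Finsupp.single_apply]

section Indicators

variable {G : Type} [Group G] [Fintype G]

lemma indicator_mem_charSpan_of_normal (D : Subgroup G) [D.Normal] :
    (fun g => if g ∈ D then (1 : ℂ) else 0) ∈ charSpan G := by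
  have hfix (g : G) (c : G ⧸ D) : g • c = c ↔ g ∈ D := by
    induction c using QuotientGroup.induction_on with
    | H x => rw [MulAction.Quotient.smul_mk, smul_eq_mul, QuotientGroup.mk_mul, mul_eq_right,
        QuotientGroup.eq_one_iff]
  have hperm : (fun g => if g ∈ D then (Nat.card (G ⧸ D) : ℂ) else 0) ∈ charSpan G := by
    refine Submodule.subset_span ⟨FDRep.of (Representation.ofMulAction ℂ G (G ⧸ D)), ?_⟩
    ext g
    rw [FDRep.character_ofMulAction]
    by_cases hg : g ∈ D <;> simp [hfix, hg, Nat.card_eq_fintype_card]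
  convert Submodule.smul_mem _ (Nat.card (G ⧸ D) : ℚ)⁻¹ hperm using 1
  ext g
  by_cases hg : g ∈ D <;> simp [hg, Rat.smul_def]

lemma indicator_zpowers_eq_mem_charSpan [IsMulCommutative G] (D : Subgroup G) :
    (fun g => if Subgroup.zpowers g = D then (1 : ℂ) else 0) ∈ charSpan G := by
  induction D using WellFoundedLT.induction with
  | _ D ih =>
    have hinv : (fun g => if Subgroup.zpowers g = D then (1 : ℂ) else 0) =
        (fun g => if g ∈ D then (1 : ℂ) else 0) -
          ∑ D' ∈ {D' | D' < D}, fun g => if Subgroup.zpowers g = D' then (1 : ℂ) else 0 := by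
      ext g
      rw [Pi.sub_apply, Finset.sum_apply, Finset.sum_ite_eq, ← Subgroup.zpowers_le]
      by_cases hD : Subgroup.zpowers g = D
      · simp [hD]
      · simp [hD, lt_iff_le_and_ne]
    rw [hinv]
    exact Submodule.sub_mem _ (indicator_mem_charSpan_of_normal D)
      (Submodule.sum_mem _ fun D' hD' => ih D' (Finset.mem_filter.mp hD').2)

end Indicators

lemma Subgroup.zpowers_eq_top_iff_zpowers_coe_eq {G : Type} [Group G] {H : Subgroup G} (y : H) :
    Subgroup.zpowers y = ⊤ ↔ Subgroup.zpowers (y : G) = H := by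
  rw [← Subgroup.map_subtype_inj, MonoidHom.map_zpowers, ← MonoidHom.range_eq_map,
    Subgroup.range_subtype, Subgroup.subtype_apply]

noncomputable def cyclicSubgroups (G : Type) [Group G] [Fintype G] : Finset (Subgroup G) :=
  {C | IsCyclic C}

@[simp]
lemma mem_cyclicSubgroups {G : Type} [Group G] [Fintype G] {C : Subgroup G} :
    C ∈ cyclicSubgroups G ↔ IsCyclic C := by
  simp [cyclicSubgroups]

section ArtinComponent

variable {G : Type} [Group G] [Fintype G]

noncomputable def artinComponent (ρ : G → ℂ) (C : Subgroup G) : C → ℂ :=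
  fun c => if Subgroup.zpowers c = ⊤ then (Nat.card C / Fintype.card G : ℂ) * ρ c else 0

lemma artinComponent_mem_charSpan {ρ : G → ℂ} (hρ : ρ ∈ charSpan G) (C : Subgroup G)
    [IsCyclic C] : artinComponent ρ C ∈ charSpan C := by
  have hgen := indicator_zpowers_eq_mem_charSpan (G := C) ⊤
  convert Submodule.smul_mem _ ((Nat.card C : ℚ) / Fintype.card G)
    (mul_mem_charSpan hgen (comp_mem_charSpan C.subtype hρ)) using 1
  ext c
  by_cases hc : Subgroup.zpowers c = ⊤ <;> simp [artinComponent, hc, Rat.smul_def]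

lemma indChar_artinComponent {ρ : G → ℂ} (hρ : ∀ g x : G, ρ (x⁻¹ * g * x) = ρ g)
    (C : Subgroup G) (g : G) :
    indChar C (artinComponent ρ C) g =
      (Fintype.card G : ℂ)⁻¹ * ∑ x : G, if Subgroup.zpowers (x⁻¹ * g * x) = C then ρ g else 0 := by
  have hC : (Nat.card C : ℂ) ≠ 0 := by exact_mod_cast Nat.card_pos.ne'
  rw [indChar, Finset.mul_sum, Finset.mul_sum]
  refine Finset.sum_congr rfl fun x _ => ?_
  by_cases hx : x⁻¹ * g * x ∈ C
  · rw [dif_pos hx, artinComponent, Subgroup.zpowers_eq_top_iff_zpowers_coe_eq]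
    split_ifs
    · rw [hρ]
      field_simp
    · simp
  · have hne : Subgroup.zpowers (x⁻¹ * g * x) ≠ C := fun h => hx (h ▸ Subgroup.mem_zpowers _)
    simp [hx, hne]

lemma sum_indChar_artinComponent {ρ : G → ℂ} (hρ : ∀ g x : G, ρ (x⁻¹ * g * x) = ρ g) :
    ∑ C ∈ cyclicSubgroups G, indChar C (artinComponent ρ C) = ρ := by
  have hG : (Fintype.card G : ℂ) ≠ 0 := by exact_mod_cast Fintype.card_ne_zero
  ext g
  have hmem (x : G) : Subgroup.zpowers (x⁻¹ * g * x) ∈ cyclicSubgroups G := by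
    simpa using Subgroup.isCyclic_zpowers _
  simp_rw [Finset.sum_apply, indChar_artinComponent hρ, ← Finset.mul_sum]
  rw [Finset.sum_comm]
  simp [Finset.sum_ite_eq, hmem, hG]

end ArtinComponent

/-- Artin's induction theorem: every virtual character `ρ ∈ R(G)` (with
rational coefficients) is a sum `Σ_k Ind_{H_k}^G φ_k` over cyclic subgroups `H_k ≤ G`
with `φ_k ∈ R(H_k)`. -/
theorem artin_induction (G : Type) [Group G] [Fintype G] (ρ : G → ℂ)
    (hρ : ρ ∈ charSpan G) :
    ∃ (m : ℕ) (H : Fin m → Subgroup G) (φ : (i : Fin m) → (H i) → ℂ),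
      (∀ i, IsCyclic (H i)) ∧ (∀ i, φ i ∈ charSpan (H i)) ∧
      ρ = ∑ i, indChar (H i) (φ i) := by
  let e := (cyclicSubgroups G).equivFin.symm
  have hcyc (i) : IsCyclic (e i : Subgroup G) := mem_cyclicSubgroups.mp (e i).2
  refine ⟨_, fun i => e i, fun i => artinComponent ρ (e i), hcyc,
    fun i => artinComponent_mem_charSpan hρ _, ?_⟩
  rw [e.sum_comp (fun C => indChar (C : Subgroup G) (artinComponent ρ C)),
    Finset.sum_coe_sort (cyclicSubgroups G) (fun C => indChar C (artinComponent ρ C)),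
    sum_indChar_artinComponent (apply_conj_of_mem_charSpan hρ)]
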